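/- arXiv:1703.04307 — 3 statements merged into one kernel-verified Lean document; each statement's English description precedes it below -/
import Mathlib

section
/- Fix a finite node set V, target node n, and for each S ⊆ V a transition kernel p_{ik}(S) on V ∪ {n} satisfying: (a) for S₁ ⊆ S₂ and k ≠ n, p_{ik}(S₁) ≥ p_{ik}(S₂); (b) Σ_k p_{ik}(S) = 1 for all i, S. Define p_i^T(S) via the truncated absorbing probability recursion. Then for every i and T, the set function S ↦ p_i^T(S) is non-decreasing: S₁ ⊆ S₂ implies p_i^T(S₁) ≤ p_i^T(S₂). -/
/-- For a family of transition kernels `p S` indexed by source sets `S`, where adding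
sources only shifts transition mass toward the target `n`, the truncated absorbing
probability `P S T i` is a non-decreasing set function of `S`. -/
theorem truncAbsorbProb_mono_in_S {σ : Type*} [Fintype σ] [DecidableEq σ] (n : σ)
    (p : Finset σ → σ → σ → ℝ)
    (hp : ∀ S i k, 0 ≤ p S i k)
    (hsum : ∀ S i, ∑ k, p S i k = 1)
    (hmono : ∀ S₁ S₂ : Finset σ, S₁ ⊆ S₂ → ∀ i k, k ≠ n → p S₂ i k ≤ p S₁ i k)
    (P : Finset σ → ℕ → σ → ℝ)
    (hPn : ∀ S t, P S t n = 1)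
    (hP0 : ∀ S i, i ≠ n → P S 0 i = 0)
    (hPrec : ∀ S (t : ℕ) (i : σ), i ≠ n → P S (t + 1) i = ∑ k, p S i k * P S t k) :
    ∀ S₁ S₂ : Finset σ, S₁ ⊆ S₂ → ∀ (T : ℕ) (i : σ), P S₁ T i ≤ P S₂ T i := by
  -- First: bounds 0 ≤ P S t i ≤ 1.
  have hbound : ∀ S (t : ℕ) (i : σ), 0 ≤ P S t i ∧ P S t i ≤ 1 := by
    intro S t
    induction t with
    | zero =>
      intro i
      by_cases hi : i = n
      · subst hi; rw [hPn]; exact ⟨zero_le_one, le_refl 1⟩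
      · rw [hP0 S i hi]; exact ⟨le_refl 0, zero_le_one⟩
    | succ t ih =>
      intro i
      by_cases hi : i = n
      · subst hi; rw [hPn]; exact ⟨zero_le_one, le_refl 1⟩
      · rw [hPrec S t i hi]
        constructor
        · exact Finset.sum_nonneg fun k _ => mul_nonneg (hp S i k) (ih k).1
        · calc ∑ k, p S i k * P S t k ≤ ∑ k, p S i k := by
                exact Finset.sum_le_sum fun k _ =>
                  mul_le_of_le_one_right (hp S i k) (ih k).2
            _ = 1 := hsum S i
  intro S₁ S₂ hS T
  induction T with
  | zero =>
    intro i
    by_cases hi : i = n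
    · subst hi; rw [hPn, hPn]
    · rw [hP0 S₁ i hi, hP0 S₂ i hi]
  | succ t ih =>
    intro i
    by_cases hi : i = n
    · subst hi; rw [hPn, hPn]
    · rw [hPrec S₁ t i hi, hPrec S₂ t i hi]
      -- rewrite ∑ p * P = 1 - ∑ p * (1 - P)
      have key : ∀ S, (∑ k, p S i k * P S t k)
          = 1 - ∑ k ∈ Finset.univ.erase n, p S i k * (1 - P S t k) := by
        intro S
        have h1 : (∑ k, p S i k * (1 - P S t k))
            = ∑ k ∈ Finset.univ.erase n, p S i k * (1 - P S t k) := by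
          rw [← Finset.sum_erase_add _ _ (Finset.mem_univ n), hPn]
          simp
        have h2 : (∑ k, p S i k * (1 - P S t k))
            = (∑ k, p S i k) - ∑ k, p S i k * P S t k := by
          rw [← Finset.sum_sub_distrib]
          congr 1; ext k; ring
        rw [← h1, h2, hsum]; ring
      rw [key S₁, key S₂]
      have : (∑ k ∈ Finset.univ.erase n, p S₂ i k * (1 - P S₂ t k))
          ≤ ∑ k ∈ Finset.univ.erase n, p S₁ i k * (1 - P S₁ t k) := by
        apply Finset.sum_le_sum
        intro k hk
        have hkn : k ≠ n := Finset.ne_of_mem_erase hk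
        have h1 : 0 ≤ 1 - P S₂ t k := by linarith [(hbound S₂ t k).2]
        have h2 : 1 - P S₂ t k ≤ 1 - P S₁ t k := by linarith [ih k]
        exact mul_le_mul (hmono S₁ S₂ hS i k hkn) h2 h1 (hp S₁ i k)
      linarith
end

section
/- Fix a finite node set V with weights w_{ij} > 0, a target node n, and a connection weight w > 0. For S ⊆ V, define transition probabilities p_{ik}(S) on V ∪ {n}: for i ∈ S, p_{in}(S) = w/(w + d_i) and p_{ik}(S) = w_{ik}/(w + d_i) for k ≠ n, where d_i = Σ_j w_{ij}; for i ∉ S, p_{ik}(S) = w_{ik}/d_i and p_{in}(S) = 0. Define the truncated hitting time h_i^T(S) via the recursion h_n^t = 0, h_i^0 = 0, h_i^t(S) = 1 + Σ_k p_{ik}(S) h_k^{t-1}(S). Then for every i and T, S ↦ h_i^T(S) is non-increasing: S₁ ⊆ S₂ implies h_i^T(S₁) ≥ h_i^T(S₂). -/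
open Finset

variable {V : Type*}

/-- Edge-addition transition kernel on `Option V`, where `none` is the target node `n`.
For `i ∈ S`, node `i` gets an extra edge of weight `wc` to the target. -/
noncomputable def ker [Fintype V] [DecidableEq V] (w : V → V → ℝ) (wc : ℝ) (S : Finset V) :
    Option V → Option V → ℝ
  | some i, some k => if i ∈ S then w i k / (wc + ∑ j, w i j) else w i k / (∑ j, w i j)
  | some i, none => if i ∈ S then wc / (wc + ∑ j, w i j) else 0
  | none, none => 1
  | none, some _ => 0

/-- Truncated absorbing probability of the target (`none`) under the edge-addition model. -/
noncomputable def AP [Fintype V] [DecidableEq V] (w : V → V → ℝ) (wc : ℝ) (S : Finset V) :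
    ℕ → Option V → ℝ
  | 0, x => if x = none then 1 else 0
  | _ + 1, none => 1
  | t + 1, some i => ∑ k, ker w wc S (some i) k * AP w wc S t k

/-- Truncated hitting time of the target (`none`) under the edge-addition model. -/
noncomputable def HT [Fintype V] [DecidableEq V] (w : V → V → ℝ) (wc : ℝ) (S : Finset V) :
    ℕ → Option V → ℝ
  | 0, _ => 0
  | _ + 1, none => 0
  | t + 1, some i => 1 + ∑ k, ker w wc S (some i) k * HT w wc S t k

/-!
Induction on `T`. Adding `i` to `S` only lowers each transition weight `w i k / d i` inside `V`
to `w i k / (wc + d i)` and moves the freed mass to the target, whose hitting time is `0`.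
Since hitting times are nonnegative, every term `p_ik · h_k` of the recursion then decreases.
-/

section

variable [Fintype V] [DecidableEq V] {w : V → V → ℝ} {wc : ℝ}

lemma ker_nonneg (hw : ∀ i j, 0 ≤ w i j) (hwc : 0 ≤ wc) (S : Finset V) (x y : Option V) :
    0 ≤ ker w wc S x y := by
  have hd : ∀ i, 0 ≤ ∑ j, w i j := fun i => sum_nonneg fun j _ => hw i j
  rcases x with _ | i <;> rcases y with _ | k <;> simp only [ker]
  · exact zero_le_one
  · exact le_rfl
  · have := hd i
    split_ifs <;> positivity
  · have := hw i k
    have := hd i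
    split_ifs <;> positivity

lemma ker_some_some_antitone (hw : ∀ i j, 0 ≤ w i j) (hwc : 0 ≤ wc) {S₁ S₂ : Finset V}
    (hS : S₁ ⊆ S₂) (i k : V) : ker w wc S₂ (some i) (some k) ≤ ker w wc S₁ (some i) (some k) := by
  rcases (sum_nonneg fun j _ => hw i j).eq_or_lt with hd | hd
  · -- a node without out-weight has no edges at all
    have hik : w i k = 0 :=
      (sum_eq_zero_iff_of_nonneg fun j _ => hw i j).1 hd.symm k (mem_univ k)
    simp [ker, hik]
  · have hstep : w i k / (wc + ∑ j, w i j) ≤ w i k / ∑ j, w i j :=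
      div_le_div_of_nonneg_left (hw i k) hd (le_add_of_nonneg_left hwc)
    by_cases h₁ : i ∈ S₁
    · simp [ker, h₁, hS h₁]
    · by_cases h₂ : i ∈ S₂ <;> simp [ker, h₁, h₂, hstep]

lemma HT_none (S : Finset V) (t : ℕ) : HT w wc S t none = 0 := by
  cases t <;> rfl

lemma HT_succ_some (S : Finset V) (t : ℕ) (i : V) :
    HT w wc S (t + 1) (some i) = 1 + ∑ k, ker w wc S (some i) (some k) * HT w wc S t (some k) := by
  rw [HT, Fintype.sum_option, HT_none, mul_zero, zero_add]

lemma HT_nonneg (hw : ∀ i j, 0 ≤ w i j) (hwc : 0 ≤ wc) (S : Finset V) (t : ℕ) (x : Option V) :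
    0 ≤ HT w wc S t x := by
  induction t generalizing x with
  | zero => exact le_rfl
  | succ t ih =>
    rcases x with _ | i
    · exact le_rfl
    · rw [HT_succ_some]
      have := sum_nonneg fun k (_ : k ∈ univ) =>
        mul_nonneg (ker_nonneg hw hwc S (some i) (some k)) (ih (some k))
      linarith

end

theorem HT_antitone_in_S_general [Fintype V] [DecidableEq V] (w : V → V → ℝ) (wc : ℝ)
    (hw : ∀ i j, 0 < w i j) (hwc : 0 < wc)
    (S₁ S₂ : Finset V) (hS : S₁ ⊆ S₂) :
    ∀ (T : ℕ) (x : Option V), HT w wc S₂ T x ≤ HT w wc S₁ T x := by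
  have hw₀ : ∀ i j, 0 ≤ w i j := fun i j => (hw i j).le
  intro T
  induction T with
  | zero => exact fun _ => le_rfl
  | succ t ih =>
    rintro (_ | i)
    · exact le_rfl
    · rw [HT_succ_some, HT_succ_some]
      gcongr with k
      · exact HT_nonneg hw₀ hwc.le S₂ t _
      · exact ker_nonneg hw₀ hwc.le S₁ _ _
      · exact ker_some_some_antitone hw₀ hwc.le hS i k
      · exact ih _

/-- The truncated hitting time is non-increasing in the set of connection sources. -/
theorem HT_antitone_in_S [Fintype V] [DecidableEq V] (w : V → V → ℝ) (wc : ℝ)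
    (hw : ∀ i j, 0 < w i j) (hwc : 0 < wc) (hd : ∀ i, 0 < ∑ j, w i j)
    (S₁ S₂ : Finset V) (hS : S₁ ⊆ S₂) :
    ∀ (T : ℕ) (x : Option V), HT w wc S₂ T x ≤ HT w wc S₁ T x :=
  HT_antitone_in_S_general w wc hw hwc S₁ S₂ hS
end

section
/- Under the edge-addition transition model, for every node i and horizon T, the set function S ↦ p_i^T(S) (truncated absorbing probability of the target n) is submodular: for S₁ ⊆ S₂ ⊆ V and s ∈ V \ S₂, p_i^T(S₁ ∪ {s}) − p_i^T(S₁) ≥ p_i^T(S₂ ∪ {s}) − p_i^T(S₂). -/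
open Finset

variable {V : Type*}

/-!
At a node `i` with out-weight `d`, one step of the recursion reads
`p_i^{t+1}(S) = (c + x) / (c + d)`, where `c = wc` if `i ∈ S` and `c = 0` otherwise, and
`x = ∑ₖ w i k · p_k^t(S)`. Inductively, the continuation masses `x` inherit submodularity from
`p^t`, and `p^t ≤ 1` makes `S ↦ p^t(S)` monotone. For `i ≠ s`, adding `s` leaves `c` unchanged,
and the larger set divides a smaller increment of `x` by a larger `c + d`. For `i = s`, the new
edge lowers the factor in front of `x` from `1 / d` to `1 / (wc + d)`; this costs more for the
larger set, whose `x` is larger.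
-/

noncomputable def absorbStep (c d x : ℝ) : ℝ := (c + x) / (c + d)

theorem absorbStep_le_one {c d x : ℝ} (hc : 0 ≤ c) (hd : 0 ≤ d) (hx : x ≤ d) :
    absorbStep c d x ≤ 1 :=
  div_le_one_of_le₀ (by linarith) (by linarith)

theorem absorbStep_mono {c c' d x x' : ℝ} (hcd : 0 < c + d) (hc : c ≤ c') (hx : x ≤ x')
    (hx' : x' ≤ d) : absorbStep c d x ≤ absorbStep c' d x' := by
  unfold absorbStep
  rw [div_le_div_iff₀ hcd (by linarith)]
  nlinarith [mul_nonneg (sub_nonneg.2 hc) (sub_nonneg.2 hx'),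
    mul_nonneg (sub_nonneg.2 hx) (by linarith : 0 ≤ c' + d)]

theorem absorbStep_sub_absorbStep_le {a b d x₁ x₁' x₂ x₂' : ℝ} (had : 0 < a + d) (hab : a ≤ b)
    (hx : x₂' - x₂ ≤ x₁' - x₁) (hx₁ : x₁ ≤ x₁') :
    absorbStep b d x₂' - absorbStep b d x₂ ≤ absorbStep a d x₁' - absorbStep a d x₁ := by
  unfold absorbStep
  rw [← sub_div, ← sub_div, add_sub_add_left_eq_sub, add_sub_add_left_eq_sub]
  exact div_le_div₀ (sub_nonneg.2 hx₁) hx had (by linarith)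

theorem absorbStep_sub_absorbStep_zero_le {c d x₁ x₁' x₂ x₂' : ℝ} (hc : 0 ≤ c) (hd : 0 < d)
    (hx : x₂' - x₂ ≤ x₁' - x₁) (hx₁₂ : x₁ ≤ x₂) :
    absorbStep c d x₂' - absorbStep 0 d x₂ ≤ absorbStep c d x₁' - absorbStep 0 d x₁ := by
  have key : (x₂' - x₁') / (c + d) ≤ (x₂ - x₁) / d :=
    div_le_div₀ (sub_nonneg.2 hx₁₂) (by linarith) hd (by linarith)
  unfold absorbStep
  rw [sub_div, sub_div] at key
  simp only [zero_add]
  linarith [add_div c x₂' (c + d), add_div c x₁' (c + d)]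

section AbsorbingProbability

variable [DecidableEq V] {w : V → V → ℝ} {wc : ℝ}

def connWeight (wc : ℝ) (S : Finset V) (i : V) : ℝ := if i ∈ S then wc else 0

theorem connWeight_mono (hwc : 0 ≤ wc) {S T : Finset V} (h : S ⊆ T) (i : V) :
    connWeight wc S i ≤ connWeight wc T i := by
  unfold connWeight
  split_ifs with hS hT <;> first | exact le_rfl | exact hwc | exact absurd (h hS) hT

theorem connWeight_nonneg (hwc : 0 ≤ wc) (S : Finset V) (i : V) : 0 ≤ connWeight wc S i :=
  connWeight_mono hwc (empty_subset S) i

theorem connWeight_insert_of_ne {s i : V} (h : i ≠ s) (S : Finset V) :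
    connWeight wc (insert s S) i = connWeight wc S i := by
  simp [connWeight, h]

variable [Fintype V]

theorem AP_none (S : Finset V) (t : ℕ) : AP w wc S t none = 1 := by
  cases t <;> simp [AP]

theorem AP_succ_some (S : Finset V) (t : ℕ) (i : V) :
    AP w wc S (t + 1) (some i) =
      absorbStep (connWeight wc S i) (∑ j, w i j) (∑ k, w i k * AP w wc S t (some k)) := by
  change ∑ k, ker w wc S (some i) k * AP w wc S t k = _
  rw [Fintype.sum_option, AP_none]
  unfold absorbStep connWeight
  split_ifs <;> simp [ker, *, add_div, sum_div, div_mul_eq_mul_div]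

theorem AP_le_one (hw : ∀ i j, 0 ≤ w i j) (hwc : 0 ≤ wc) (S : Finset V) :
    ∀ t x, AP w wc S t x ≤ 1
  | 0, x => by cases x <;> simp [AP]
  | t + 1, none => (AP_none S _).le
  | t + 1, some i => by
    rw [AP_succ_some]
    exact absorbStep_le_one (connWeight_nonneg hwc S i) (sum_nonneg fun j _ => hw i j)
      (sum_le_sum fun k _ => mul_le_of_le_one_right (hw i k) (AP_le_one hw hwc S t (some k)))

theorem AP_mono (hw : ∀ i j, 0 ≤ w i j) (hwc : 0 ≤ wc) (hd : ∀ i, 0 < ∑ j, w i j)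
    {S T : Finset V} (hST : S ⊆ T) : ∀ t x, AP w wc S t x ≤ AP w wc T t x
  | 0, x => le_rfl
  | t + 1, none => by rw [AP_none, AP_none]
  | t + 1, some i => by
    rw [AP_succ_some, AP_succ_some]
    exact absorbStep_mono (by linarith [connWeight_nonneg hwc S i, hd i])
      (connWeight_mono hwc hST i)
      (sum_le_sum fun k _ => mul_le_mul_of_nonneg_left (AP_mono hw hwc hd hST t (some k)) (hw i k))
      (sum_le_sum fun k _ => mul_le_of_le_one_right (hw i k) (AP_le_one hw hwc T t (some k)))

end AbsorbingProbability

theorem AP_submodular_general [Fintype V] [DecidableEq V] (w : V → V → ℝ) (wc : ℝ)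
    (hw : ∀ i j, 0 < w i j) (hwc : 0 < wc)
    (S₁ S₂ : Finset V) (hS : S₁ ⊆ S₂) (s : V) (hs : s ∉ S₂) :
    ∀ (T : ℕ) (i : V),
      AP w wc (insert s S₂) T (some i) - AP w wc S₂ T (some i) ≤
        AP w wc (insert s S₁) T (some i) - AP w wc S₁ T (some i) := by
  have hw₀ : ∀ i j, 0 ≤ w i j := fun i j => (hw i j).le
  have hd : ∀ i, 0 < ∑ j, w i j := fun i => sum_pos (fun j _ => hw i j) ⟨i, mem_univ i⟩
  have hmono {A B : Finset V} (h : A ⊆ B) := AP_mono hw₀ hwc.le hd h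
  intro T
  induction T with
  | zero => simp [AP]
  | succ t ih =>
    intro i
    have hx : ∑ k, w i k * AP w wc (insert s S₂) t (some k) - ∑ k, w i k * AP w wc S₂ t (some k)
        ≤ ∑ k, w i k * AP w wc (insert s S₁) t (some k) - ∑ k, w i k * AP w wc S₁ t (some k) := by
      simp only [← sum_sub_distrib, ← mul_sub]
      exact sum_le_sum fun k _ => mul_le_mul_of_nonneg_left (ih k) (hw₀ i k)
    simp only [AP_succ_some]
    by_cases his : i = s
    · subst his
      have hi₁ : i ∉ S₁ := fun h => hs (hS h)
      simp only [connWeight, mem_insert_self, if_true, hs, hi₁, if_false]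
      exact absorbStep_sub_absorbStep_zero_le hwc.le (hd i) hx
        (sum_le_sum fun k _ => mul_le_mul_of_nonneg_left (hmono hS t (some k)) (hw₀ i k))
    · simp only [connWeight_insert_of_ne his]
      exact absorbStep_sub_absorbStep_le (by linarith [connWeight_nonneg hwc.le S₁ i, hd i])
        (connWeight_mono hwc.le hS i) hx
        (sum_le_sum fun k _ => mul_le_mul_of_nonneg_left
          (hmono (subset_insert s S₁) t (some k)) (hw₀ i k))

/-- Under the edge-addition transition model, the truncated absorbing probability
`S ↦ p_i^T(S)` of the target is a submodular set function. -/
theorem AP_submodular [Fintype V] [DecidableEq V] (w : V → V → ℝ) (wc : ℝ)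
    (hw : ∀ i j, 0 < w i j) (hwc : 0 < wc) (hd : ∀ i, 0 < ∑ j, w i j)
    (S₁ S₂ : Finset V) (hS : S₁ ⊆ S₂) (s : V) (hs : s ∉ S₂) :
    ∀ (T : ℕ) (i : V),
      AP w wc (insert s S₂) T (some i) - AP w wc S₂ T (some i) ≤
        AP w wc (insert s S₁) T (some i) - AP w wc S₁ T (some i) :=
  AP_submodular_general w wc hw hwc S₁ S₂ hS s hs
end
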